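/- If a parallel computation has work T₁ and span T∞, then a greedy scheduler on p processors completes it in time T_p ≤ T₁/p + T∞ (Brent's theorem / the greedy scheduling bound), and T_p ≥ max(T₁/p, T∞). -/

import Mathlib

/-! A step that runs fewer than `p` instructions runs every ready one, so every instruction
executed later has a predecessor that has not finished by then. Following, from an instruction
executed at step `Tp`, the predecessor that finishes last, one gets a chain whose length bounds
the number of such incomplete steps; hence there are at most `span` of them. Every other step
does `p` units of work, which gives `p * Tp ≤ T₁ + p * span`. The lower bounds hold for any
schedule: at most `p` instructions run per step, and the steps along a chain increase. -/

open Finset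

theorem Finset.mul_card_le_sum_add_mul_card_filter_ne {α : Type*} (s : Finset α) (f : α → ℕ)
    (p : ℕ) : p * #s ≤ ∑ a ∈ s, f a + p * #{a ∈ s | f a ≠ p} := by
  have hfull : p * #{a ∈ s | f a = p} = ∑ a ∈ s with f a = p, f a := by
    rw [sum_congr rfl fun a ha => (mem_filter.1 ha).2, sum_const, smul_eq_mul, mul_comm]
  calc p * #s = p * #{a ∈ s | f a = p} + p * #{a ∈ s | f a ≠ p} := by
        rw [← mul_add, card_filter_add_card_filter_not]
    _ ≤ ∑ a ∈ s, f a + p * #{a ∈ s | f a ≠ p} := by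
        rw [hfull]
        exact Nat.add_le_add_right (sum_le_sum_of_subset (filter_subset _ s)) _

namespace GreedySchedule

variable {ι : Type*}

lemma length_le_of_isChain {edge : ι → ι → Prop} {time : ι → ℕ} {T : ℕ}
    (hvalid : ∀ i j, edge i j → time i < time j) (hpos : ∀ i, 1 ≤ time i)
    (hle : ∀ i, time i ≤ T) {l : List ι} (hl : l.IsChain edge) : l.length ≤ T := by
  suffices ∀ a l, (a :: l).IsChain edge → l.length + time a ≤ T by
    cases l with
    | nil => exact Nat.zero_le T
    | cons a l => have := this a l hl; have := hpos a; simp only [List.length_cons]; omega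
  intro a l
  induction l generalizing a with
  | nil => exact fun _ => by simpa using hle a
  | cons b l ih =>
    intro h
    rw [List.isChain_cons_cons] at h
    have := ih b h.2
    have := hvalid a b h.1
    simp only [List.length_cons]
    omega

variable [Fintype ι] (edge : ι → ι → Prop) (time : ι → ℕ)

def executedAt (t : ℕ) : Finset ι := {i | time i = t}

open scoped Classical in
noncomputable def readyAt (t : ℕ) : Finset ι := {i | t ≤ time i ∧ ∀ j, edge j i → time j < t}

lemma natCard_executedAt (t : ℕ) :
    Nat.card {i : ι // time i = t} = #(executedAt time t) := by
  rw [Nat.card_eq_fintype_card, Fintype.card_subtype, executedAt]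

lemma natCard_readyAt (t : ℕ) :
    Nat.card {i : ι // t ≤ time i ∧ ∀ j, edge j i → time j < t} = #(readyAt edge time t) := by
  classical
  rw [Nat.card_eq_fintype_card, Fintype.card_subtype, readyAt]

variable {edge time}

lemma card_eq_sum_card_executedAt {T : ℕ} (hpos : ∀ i, 1 ≤ time i) (hle : ∀ i, time i ≤ T) :
    Fintype.card ι = ∑ t ∈ Icc 1 T, #(executedAt time t) := by
  rw [← card_univ]
  exact card_eq_sum_card_fiberwise fun i _ => mem_Icc.2 ⟨hpos i, hle i⟩

lemma executedAt_subset_readyAt (hvalid : ∀ i j, edge i j → time i < time j) (t : ℕ) :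
    executedAt time t ⊆ readyAt edge time t := by
  intro i hi
  simp only [executedAt, mem_filter, mem_univ, true_and] at hi
  simp only [readyAt, mem_filter, mem_univ, true_and]
  exact ⟨hi.ge, fun j hj => hi ▸ hvalid j i hj⟩

lemma readyAt_subset_executedAt_of_card_ne {p t : ℕ}
    (hvalid : ∀ i j, edge i j → time i < time j)
    (hgreedy : #(executedAt time t) = min p #(readyAt edge time t))
    (hne : #(executedAt time t) ≠ p) :
    readyAt edge time t ⊆ executedAt time t := by
  have hcard : #(executedAt time t) = #(readyAt edge time t) := by omega
  exact (eq_of_subset_of_card_le (executedAt_subset_readyAt hvalid t) hcard.ge).ge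

lemma exists_edge_time_ge_of_lt {s : ℕ} {i : ι} (hs : readyAt edge time s ⊆ executedAt time s)
    (hlt : s < time i) : ∃ j, edge j i ∧ s ≤ time j := by
  by_contra! h
  have hready : i ∈ readyAt edge time s := by
    simp only [readyAt, mem_filter, mem_univ, true_and]
    exact ⟨hlt.le, h⟩
  have hexec := hs hready
  simp only [executedAt, mem_filter, mem_univ, true_and] at hexec
  omega

theorem exists_isChain_card_filter_le (hvalid : ∀ i j, edge i j → time i < time j)
    (S : Finset ℕ) (hS : ∀ s ∈ S, readyAt edge time s ⊆ executedAt time s) (i : ι) :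
    ∃ l : List ι, (i :: l).IsChain (flip edge) ∧ #{s ∈ S | s ≤ time i} ≤ l.length + 1 := by
  classical
  induction hn : time i using Nat.strong_induction_on generalizing i with
  | _ n ih =>
  subst hn
  by_cases hpred : ∃ j, edge j i
  · -- The predecessor finishing last is unfinished at every earlier step of `S`.
    obtain ⟨j, hj, hjmax⟩ := exists_max_image {j | edge j i} time
      (by obtain ⟨j, hj⟩ := hpred; exact ⟨j, by simpa using hj⟩)
    simp only [mem_filter, mem_univ, true_and] at hj hjmax
    obtain ⟨l, hl, hcard⟩ := ih (time j) (hvalid j i hj) j rfl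
    refine ⟨j :: l, List.IsChain.cons_cons hj hl, ?_⟩
    have hsub : {s ∈ S | s ≤ time i} ⊆ insert (time i) {s ∈ S | s ≤ time j} := by
      intro s hs
      rw [mem_filter] at hs
      rcases hs.2.eq_or_lt with h | h
      · exact mem_insert.2 (Or.inl h)
      · obtain ⟨j', hj', hsj'⟩ := exists_edge_time_ge_of_lt (hS s hs.1) h
        exact mem_insert_of_mem (mem_filter.2 ⟨hs.1, hsj'.trans (hjmax j' hj')⟩)
    calc #{s ∈ S | s ≤ time i} ≤ #{s ∈ S | s ≤ time j} + 1 :=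
          (card_le_card hsub).trans (card_insert_le _ _)
      _ ≤ (j :: l).length + 1 := by simp only [List.length_cons]; omega
  · push Not at hpred
    refine ⟨[], List.isChain_singleton i, ?_⟩
    have hsub : {s ∈ S | s ≤ time i} ⊆ {time i} := by
      intro s hs
      rw [mem_filter] at hs
      rcases hs.2.eq_or_lt with h | h
      · exact mem_singleton.2 h
      · obtain ⟨j, hj, -⟩ := exists_edge_time_ge_of_lt (hS s hs.1) h
        exact absurd hj (hpred j)
    simpa using card_le_card hsub

lemma mul_le_card_add_mul_of_isChain_le {p T span : ℕ}
    (hvalid : ∀ i j, edge i j → time i < time j) (hpos : ∀ i, 1 ≤ time i)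
    (hle : ∀ i, time i ≤ T) {last : ι} (hlast : time last = T)
    (hstep : ∀ t ∈ Icc 1 T, #(executedAt time t) = min p #(readyAt edge time t))
    (hspan : ∀ l : List ι, l.IsChain edge → l.length ≤ span) :
    p * T ≤ Fintype.card ι + p * span := by
  have hincomplete : #{t ∈ Icc 1 T | #(executedAt time t) ≠ p} ≤ span := by
    obtain ⟨l, hl, hcard⟩ := exists_isChain_card_filter_le hvalid _
      (fun t ht => readyAt_subset_executedAt_of_card_ne hvalid (hstep t (mem_filter.1 ht).1)
        (mem_filter.1 ht).2) last
    rw [filter_true_of_mem fun t ht => hlast ▸ (mem_Icc.1 (mem_filter.1 ht).1).2] at hcard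
    have hchain := hspan _ (List.isChain_reverse.2 hl)
    rw [List.length_reverse, List.length_cons] at hchain
    exact hcard.trans hchain
  calc p * T = p * #(Icc 1 T) := by rw [Nat.card_Icc, Nat.add_sub_cancel]
    _ ≤ Fintype.card ι + p * #{t ∈ Icc 1 T | #(executedAt time t) ≠ p} :=
      card_eq_sum_card_executedAt hpos hle ▸ mul_card_le_sum_add_mul_card_filter_ne _ _ p
    _ ≤ Fintype.card ι + p * span := by gcongr

end GreedySchedule

open GreedySchedule in
theorem greedy_scheduling_bound_general (ι : Type) [Fintype ι]
    (edge : ι → ι → Prop) (p span Tp : ℕ) (hp : 1 ≤ p)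
    (hspan_ub : ∀ l : List ι, l.Chain' edge → l.length ≤ span)
    (hspan_ex : ∃ l : List ι, l.Chain' edge ∧ l.length = span)
    (time : ι → ℕ)
    (htime1 : ∀ i, 1 ≤ time i)
    (hvalid : ∀ i j, edge i j → time i < time j)
    (hTp : ∀ i, time i ≤ Tp) (hTpex : ∃ i, time i = Tp)
    (hgreedy : ∀ t : ℕ, 1 ≤ t → t ≤ Tp →
      Nat.card {i : ι // time i = t} =
        min p (Nat.card {i : ι // t ≤ time i ∧ ∀ j, edge j i → time j < t})) :
    (Tp : ℝ) ≤ (Fintype.card ι : ℝ) / p + span ∧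
    (Fintype.card ι : ℝ) / p ≤ Tp ∧ (span : ℝ) ≤ Tp := by
  obtain ⟨last, hlast⟩ := hTpex
  have hstep : ∀ t ∈ Icc 1 Tp, #(executedAt time t) = min p #(readyAt edge time t) :=
    fun t ht => by
      rw [← natCard_executedAt, ← natCard_readyAt]
      exact hgreedy t (mem_Icc.1 ht).1 (mem_Icc.1 ht).2
  have hlower : Fintype.card ι ≤ p * Tp := by
    calc Fintype.card ι ≤ ∑ _t ∈ Icc 1 Tp, p :=
          card_eq_sum_card_executedAt htime1 hTp ▸
            sum_le_sum fun t ht => (hstep t ht).trans_le (min_le_left _ _)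
      _ = p * Tp := by rw [sum_const, Nat.card_Icc, smul_eq_mul, Nat.add_sub_cancel, mul_comm]
  have hupper : p * Tp ≤ Fintype.card ι + p * span :=
    mul_le_card_add_mul_of_isChain_le hvalid htime1 hTp hlast hstep hspan_ub
  have hspan : span ≤ Tp := by
    obtain ⟨l, hl, rfl⟩ := hspan_ex
    exact length_le_of_isChain hvalid htime1 hTp hl
  have hp' : (0 : ℝ) < p := by exact_mod_cast hp
  refine ⟨?_, ?_, by exact_mod_cast hspan⟩
  · rw [div_add' _ _ _ hp'.ne', le_div_iff₀ hp']
    have hupper' : (p * Tp : ℝ) ≤ Fintype.card ι + p * span := by exact_mod_cast hupper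
    linarith
  · rw [div_le_iff₀ hp', mul_comm]
    exact_mod_cast hlower

/-- Brent's theorem / the greedy-scheduling bound.  A computation is a finite
DAG of unit-time instructions (`edge i j` = `i` must finish before `j` starts);
its work `T₁` is the number of instructions and its span is the length of the
longest chain.  A greedy schedule on `p` processors assigns each instruction a
time step respecting precedences, runs at each step `min p (#ready)`
instructions, and finishes at time `Tp`.  Then
`max (T₁/p) span ≤ Tp ≤ T₁/p + span`. -/
theorem greedy_scheduling_bound (ι : Type) [Fintype ι] [Nonempty ι]
    (edge : ι → ι → Prop) (p span Tp : ℕ) (hp : 1 ≤ p)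
    (hspan_ub : ∀ l : List ι, l.Chain' edge → l.length ≤ span)
    (hspan_ex : ∃ l : List ι, l.Chain' edge ∧ l.length = span)
    (time : ι → ℕ)
    (htime1 : ∀ i, 1 ≤ time i)
    (hvalid : ∀ i j, edge i j → time i < time j)
    (hTp : ∀ i, time i ≤ Tp) (hTpex : ∃ i, time i = Tp)
    (hgreedy : ∀ t : ℕ, 1 ≤ t → t ≤ Tp →
      Nat.card {i : ι // time i = t} =
        min p (Nat.card {i : ι // t ≤ time i ∧ ∀ j, edge j i → time j < t})) :
    (Tp : ℝ) ≤ (Fintype.card ι : ℝ) / p + span ∧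
    (Fintype.card ι : ℝ) / p ≤ Tp ∧ (span : ℝ) ≤ Tp :=
  greedy_scheduling_bound_general ι edge p span Tp hp hspan_ub hspan_ex time htime1 hvalid hTp hTpex
    hgreedy
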